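/- Let k be a symmetric positive-semidefinite kernel on ℝ^d, let x^(1),…,x^(N) (N ≥ 1) be training inputs and σ_n² > 0 a noise variance. Then for every x ∈ ℝ^d the Gaussian process posterior variance satisfies σ_N²(x) ≤ k(x,x) − ( N · min_{1≤i≤N} k(x^(i),x)² ) / ( N · max_{1≤i,j≤N} k(x^(i),x^(j)) + σ_n² ). -/

import Mathlib

/-! With `A = K_N + σ_n² I` positive definite, Cauchy–Schwarz for the form `(u, w) ↦ uᵀ A w`
gives `(vᵀ k_N)² ≤ (vᵀ A v) · k_Nᵀ A⁻¹ k_N` for every `v`. Take `v` the sign vector of `k_N`: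
then `vᵀ k_N = ∑ᵢ |k(x, x⁽ⁱ⁾)| ≥ N √(minᵢ k(x⁽ⁱ⁾, x)²)`, while positive semidefiniteness bounds
every `|K_ij|` by the largest diagonal entry, so `vᵀ A v ≤ N (N max K + σ_n²)`. -/

open Matrix

namespace Matrix

variable {n : Type*} [Fintype n]

lemma PosSemidef.apply_sq_le {A : Matrix n n ℝ} (hA : A.PosSemidef) (i j : n) :
    A i j ^ 2 ≤ A i i * A j j := by
  classical
  have hsymm : A j i = A i j := by simpa using congrFun (congrFun hA.isHermitian.eq i) j
  have := (Matrix.toBilin' A).apply_mul_apply_le_of_forall_zero_le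
    (fun x => by simpa [toBilin'_apply'] using hA.dotProduct_mulVec_nonneg x)
    (Pi.single i 1) (Pi.single j 1)
  simpa [sq, hsymm] using this

lemma PosSemidef.abs_apply_le {A : Matrix n n ℝ} (hA : A.PosSemidef) {M : ℝ}
    (hM : ∀ i, A i i ≤ M) (i j : n) : |A i j| ≤ M := by
  have hM₀ : 0 ≤ M := hA.diag_nonneg.trans (hM i)
  refine abs_le_of_sq_le_sq ((hA.apply_sq_le i j).trans ?_) hM₀
  rw [sq]
  exact mul_le_mul (hM i) (hM j) hA.diag_nonneg hM₀

lemma dotProduct_mulVec_le_of_abs_le {A : Matrix n n ℝ} {M : ℝ} (hA : ∀ i j, |A i j| ≤ M)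
    {v : n → ℝ} (hv : ∀ i, |v i| ≤ 1) : v ⬝ᵥ A *ᵥ v ≤ Fintype.card n ^ 2 * M := by
  classical
  have hterm : ∀ i j, v i * A i j * v j ≤ M := fun i j => calc
    v i * A i j * v j ≤ |v i * A i j * v j| := le_abs_self _
    _ = |v i| * |A i j| * |v j| := by rw [abs_mul, abs_mul]
    _ ≤ 1 * M * 1 := by
      have hM₀ : 0 ≤ M := (abs_nonneg _).trans (hA i j)
      gcongr
      exacts [hv i, hA i j, hv j]
    _ = M := by ring
  rw [← toBilin'_apply', toBilin'_apply]
  calc ∑ i, ∑ j, v i * A i j * v j ≤ ∑ _i : n, ∑ _j : n, M := by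
        gcongr with i _ j _; exact hterm i j
    _ = Fintype.card n ^ 2 * M := by simp [sq, mul_assoc]

lemma dotProduct_self_le_card {v : n → ℝ} (hv : ∀ i, |v i| ≤ 1) :
    v ⬝ᵥ v ≤ Fintype.card n := by
  calc v ⬝ᵥ v = ∑ i, |v i| ^ 2 := by simp [dotProduct, sq]
    _ ≤ ∑ _i : n, (1 : ℝ) := by gcongr with i; exact pow_le_one₀ (abs_nonneg _) (hv i)
    _ = Fintype.card n := by simp

variable [DecidableEq n]

lemma PosDef.sq_dotProduct_le {A : Matrix n n ℝ} (hA : A.PosDef) (v b : n → ℝ) :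
    (v ⬝ᵥ b) ^ 2 ≤ (v ⬝ᵥ A *ᵥ v) * (b ⬝ᵥ A⁻¹ *ᵥ b) := by
  set u := A⁻¹ *ᵥ b
  have hAu : A *ᵥ u = b := by
    rw [mulVec_mulVec, mul_nonsing_inv A ((isUnit_iff_isUnit_det A).mp hA.isUnit), one_mulVec]
  have hsymm : Aᵀ = A := by simpa using hA.isHermitian.eq
  have hcs := (Matrix.toBilin' A).apply_mul_apply_le_of_forall_zero_le
    (fun x => by simpa [toBilin'_apply'] using hA.posSemidef.dotProduct_mulVec_nonneg x) v u
  simp only [toBilin'_apply'] at hcs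
  have huA : u ᵥ* A = b := by rw [← hsymm, vecMul_transpose, hAu]
  rw [hAu, dotProduct_mulVec u, huA, dotProduct_comm b v] at hcs
  rwa [sq, dotProduct_comm b u]

lemma dotProduct_add_smul_one_mulVec_le {K : Matrix n n ℝ} {M σ : ℝ} (hK : ∀ i j, |K i j| ≤ M)
    (hσ : 0 ≤ σ) {v : n → ℝ} (hv : ∀ i, |v i| ≤ 1) :
    v ⬝ᵥ (K + σ • 1) *ᵥ v ≤ Fintype.card n * (Fintype.card n * M + σ) := by
  have hK' := dotProduct_mulVec_le_of_abs_le hK hv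
  have hvv := dotProduct_self_le_card hv
  rw [add_mulVec, smul_mulVec, one_mulVec, dotProduct_add, dotProduct_smul, smul_eq_mul]
  nlinarith

end Matrix

lemma card_sq_mul_iInf_sq_le_sq_sum_abs {ι : Type*} [Fintype ι] (f : ι → ℝ) :
    (Fintype.card ι : ℝ) ^ 2 * ⨅ i, f i ^ 2 ≤ (∑ i, |f i|) ^ 2 := by
  set m := ⨅ i, f i ^ 2
  have hm₀ : 0 ≤ m := Real.iInf_nonneg fun i => sq_nonneg (f i)
  have hsqrt : ∀ i, √m ≤ |f i| := fun i => by
    rw [← Real.sqrt_sq_eq_abs]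
    exact Real.sqrt_le_sqrt (ciInf_le (Set.finite_range _).bddBelow i)
  have hsum : Fintype.card ι * √m ≤ ∑ i, |f i| := by
    simpa using Finset.card_nsmul_le_sum Finset.univ (fun i => |f i|) (√m) fun i _ => hsqrt i
  calc (Fintype.card ι : ℝ) ^ 2 * m = (Fintype.card ι * √m) ^ 2 := by
        rw [mul_pow, Real.sq_sqrt hm₀]
    _ ≤ (∑ i, |f i|) ^ 2 := by gcongr

/-- Intermediate posterior variance bound via min/max kernel values. -/
theorem gp_posterior_variance_bound_minmax
    (d N : ℕ) (hN : 1 ≤ N)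
    (X : Fin N → EuclideanSpace ℝ (Fin d))
    (σn2 : ℝ) (hσ : 0 < σn2)
    (k : EuclideanSpace ℝ (Fin d) → EuclideanSpace ℝ (Fin d) → ℝ)
    (hsymm : ∀ x y, k x y = k y x)
    (hpsd : ∀ (m : ℕ) (z : Fin m → EuclideanSpace ℝ (Fin d)),
      (Matrix.of fun i j => k (z i) (z j)).PosSemidef)
    (x : EuclideanSpace ℝ (Fin d)) :
    letI K : Matrix (Fin N) (Fin N) ℝ := Matrix.of fun i j => k (X i) (X j)
    letI kN : Fin N → ℝ := fun i => k x (X i)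
    letI σ2 : ℝ := k x x - kN ⬝ᵥ ((K + σn2 • (1 : Matrix (Fin N) (Fin N) ℝ))⁻¹ *ᵥ kN)
    σ2 ≤ k x x - (N * (⨅ i, k (X i) x ^ 2)) / (N * (⨆ i, ⨆ j, k (X i) (X j)) + σn2) := by
  set K : Matrix (Fin N) (Fin N) ℝ := Matrix.of fun i j => k (X i) (X j)
  set kN : Fin N → ℝ := fun i => k x (X i)
  set M := ⨆ i, ⨆ j, k (X i) (X j)
  set S := kN ⬝ᵥ (K + σn2 • 1)⁻¹ *ᵥ kN
  have hK : K.PosSemidef := hpsd N X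
  have hA : (K + σn2 • 1).PosDef := PosDef.posSemidef_add hK (PosDef.one.smul hσ)
  have hS : 0 ≤ S := by simpa using hA.inv.posSemidef.dotProduct_mulVec_nonneg kN
  have hKM : ∀ i j, |K i j| ≤ M := hK.abs_apply_le fun i =>
    (le_ciSup (Set.finite_range _).bddAbove i).trans'
      (le_ciSup (f := fun j => K i j) (Set.finite_range _).bddAbove i)
  have hM : 0 ≤ M := (abs_nonneg _).trans (hKM ⟨0, hN⟩ ⟨0, hN⟩)
  set v : Fin N → ℝ := fun i => SignType.sign (kN i)
  have hv : ∀ i, |v i| ≤ 1 := fun i => by simp only [v]; cases SignType.sign (kN i) <;> simp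
  have hvk : v ⬝ᵥ kN = ∑ i, |kN i| := by simp only [dotProduct, v, sign_mul_self]
  have hmin : (N : ℝ) ^ 2 * ⨅ i, k (X i) x ^ 2 ≤ (v ⬝ᵥ kN) ^ 2 := by
    simpa only [hvk, Fintype.card_fin, hsymm _ x] using card_sq_mul_iInf_sq_le_sq_sum_abs kN
  have hvAv : v ⬝ᵥ (K + σn2 • 1) *ᵥ v ≤ N * (N * M + σn2) := by
    simpa using dotProduct_add_smul_one_mulVec_le hKM hσ.le hv
  have hN₀ : (0 : ℝ) < N := by exact_mod_cast hN
  suffices N * (N * ⨅ i, k (X i) x ^ 2) ≤ N * ((N * M + σn2) * S) by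
    show k x x - S ≤ _
    rw [sub_le_sub_iff_left, div_le_iff₀ (by positivity), mul_comm S]
    exact le_of_mul_le_mul_left this hN₀
  calc (N : ℝ) * (N * ⨅ i, k (X i) x ^ 2) ≤ (v ⬝ᵥ kN) ^ 2 := by
        rwa [← mul_assoc, ← sq]
    _ ≤ (v ⬝ᵥ (K + σn2 • 1) *ᵥ v) * S := hA.sq_dotProduct_le v kN
    _ ≤ N * (N * M + σn2) * S := by gcongr
    _ = N * ((N * M + σn2) * S) := by ring
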